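/- For every integer n ≥ 2, the independence complex I(M^H_{1,n+1}) has the same simple homotopy type as the suspension Σ I(C^H_{1,n}). -/

import Mathlib

/-! ## Abstract simplicial complexes, collapses, simple homotopy type -/

/-- `K` is obtained from `L` by removing a free pair `(σ, τ)`:
`σ ⊊ τ`, `|τ| = |σ| + 1`, and `τ` is the unique face of `K` strictly containing `σ`. -/
def IsElemCollapse {V : Type} [DecidableEq V] (K L : Finset (Finset V)) : Prop :=
  ∃ σ τ : Finset V, σ ∈ K ∧ τ ∈ K ∧ σ ⊂ τ ∧ τ.card = σ.card + 1 ∧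
    (∀ ρ ∈ K, σ ⊂ ρ → ρ = τ) ∧ L = K \ {σ, τ}

/-- `K` collapses onto `L` by a finite sequence of elementary collapses. -/
def Collapses {V : Type} [DecidableEq V] (K L : Finset (Finset V)) : Prop :=
  Relation.ReflTransGen (fun A B => IsElemCollapse A B) K L

/-- A finite abstract simplicial complex (with its ambient vertex type). -/
structure AbsCplx : Type 1 where
  V : Type
  [deceq : DecidableEq V]
  faces : Finset (Finset V)
  empty_mem : ∅ ∈ faces
  down_closed : ∀ σ ∈ faces, ∀ τ ⊆ σ, τ ∈ faces

attribute [instance] AbsCplx.deceq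

/-- Isomorphism of abstract simplicial complexes: an injection of the vertices
(the vertices being the elements occurring in faces) carrying faces exactly to faces. -/
def AbsCplx.Iso (K L : AbsCplx) : Prop :=
  ∃ f : K.V → L.V, Set.InjOn f {v | ({v} : Finset K.V) ∈ K.faces} ∧
    L.faces = K.faces.image (Finset.image f)

/-- One step: an isomorphism or an elementary collapse. -/
def AbsCplx.Step (K L : AbsCplx) : Prop :=
  K.Iso L ∨ ∃ h : K.V = L.V, IsElemCollapse (h ▸ K.faces) L.faces

/-- Same simple homotopy type: finite zigzag of elementary collapses,
elementary expansions, and isomorphisms. -/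
def SimpleHtpyEq (K L : AbsCplx) : Prop := Relation.EqvGen AbsCplx.Step K L

/-! ## Join, suspension, spheres, wedges, point -/

/-- Join of two complexes, on the disjoint union of the vertex types. -/
def AbsCplx.join (K L : AbsCplx) : AbsCplx where
  V := K.V ⊕ L.V
  faces := (K.faces ×ˢ L.faces).image fun p => p.1.disjSum p.2
  empty_mem := by
    refine Finset.mem_image.2 ⟨(∅, ∅), Finset.mem_product.2 ⟨K.empty_mem, L.empty_mem⟩, ?_⟩
    ext x
    cases x <;> simp [Finset.inl_mem_disjSum, Finset.inr_mem_disjSum]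
  down_closed := by
    intro σ hσ τ hτ
    rcases Finset.mem_image.1 hσ with ⟨p, hp, rfl⟩
    rcases Finset.mem_product.1 hp with ⟨hp1, hp2⟩
    refine Finset.mem_image.2
      ⟨(p.1.filter (fun v => Sum.inl v ∈ τ), p.2.filter (fun w => Sum.inr w ∈ τ)), ?_, ?_⟩
    · exact Finset.mem_product.2
        ⟨K.down_closed _ hp1 _ (Finset.filter_subset _ _),
         L.down_closed _ hp2 _ (Finset.filter_subset _ _)⟩
    · ext x
      cases x with
      | inl v =>
        simp only [Finset.inl_mem_disjSum, Finset.mem_filter]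
        exact ⟨fun h => h.2, fun h => ⟨Finset.inl_mem_disjSum.1 (hτ h), h⟩⟩
      | inr w =>
        simp only [Finset.inr_mem_disjSum, Finset.mem_filter]
        exact ⟨fun h => h.2, fun h => ⟨Finset.inr_mem_disjSum.1 (hτ h), h⟩⟩

/-- `∂Δ¹`: two vertices, no edge. -/
def sphere0 : AbsCplx where
  V := Bool
  faces := {∅, {false}, {true}}
  empty_mem := by decide
  down_closed := by decide

/-- The one point complex. -/
def ptCplx : AbsCplx where
  V := Unit
  faces := {∅, {()}}
  empty_mem := by decide
  down_closed := by decide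

/-- Suspension `ΣK = K * ∂Δ¹`. -/
def AbsCplx.susp (K : AbsCplx) : AbsCplx := K.join sphere0

/-- Iterated suspension `Σ^m K`. -/
def AbsCplx.nsusp (K : AbsCplx) (m : ℕ) : AbsCplx := AbsCplx.susp^[m] K

/-- `◊ⁿ`, the join of `n+1` copies of `∂Δ¹` (a triangulated `n`-sphere). -/
def diamond : ℕ → AbsCplx
  | 0 => sphere0
  | n + 1 => (diamond n).join sphere0

/-- A chosen base vertex of `◊ⁿ`. -/
def diamondPt : (n : ℕ) → (diamond n).V
  | 0 => true
  | _ + 1 => Sum.inr true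

/-- Wedge of `m` copies of `K`, identifying the chosen vertex `v₀` of each copy
to a single common vertex. -/
def wedge (m : ℕ) (K : AbsCplx) (v₀ : K.V) : AbsCplx where
  V := Option (Fin m × K.V)
  faces := insert ∅ ((Finset.univ (α := Fin m) ×ˢ K.faces).image fun p =>
    p.2.image fun v => if v = v₀ then none else some (p.1, v))
  empty_mem := Finset.mem_insert_self _ _
  down_closed := by
    intro σ hσ τ hτ
    rcases Finset.mem_insert.1 hσ with h | h
    · subst h
      rw [Finset.subset_empty.1 hτ]
      exact Finset.mem_insert_self _ _
    · rcases Finset.mem_image.1 h with ⟨p, hp, rfl⟩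
      rcases Finset.mem_product.1 hp with ⟨-, hp2⟩
      rcases Finset.subset_image_iff.1 hτ with ⟨τ₀, hτ₀, rfl⟩
      exact Finset.mem_insert.2 (Or.inr (Finset.mem_image.2
        ⟨(p.1, τ₀), Finset.mem_product.2 ⟨Finset.mem_univ _, K.down_closed _ hp2 _ hτ₀⟩, rfl⟩))

/-! ## Graphs and independence complexes -/

/-- The closed neighborhood `N[v]`. -/
def closedNbhd {V : Type} (G : SimpleGraph V) (v : V) : Set V := insert v {w | G.Adj v w}

/-- The graph `G - e` obtained by removing the edge `vw`. -/
def deleteEdge {V : Type} [DecidableEq V] (G : SimpleGraph V) (v w : V) : SimpleGraph V where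
  Adj a b := G.Adj a b ∧ s(a, b) ≠ s(v, w)
  symm := by
    constructor
    intro a b h
    exact ⟨G.symm.symm _ _ h.1, by rw [Sym2.eq_swap]; exact h.2⟩
  loopless := ⟨fun a h => G.loopless.irrefl a h.1⟩

instance {V : Type} [DecidableEq V] (G : SimpleGraph V) [DecidableRel G.Adj] (v w : V) :
    DecidableRel (deleteEdge G v w).Adj := fun a b =>
  inferInstanceAs (Decidable (G.Adj a b ∧ s(a, b) ≠ s(v, w)))

/-- Independent finsets of `G` contained in the vertex set `s`
(the faces of the independence complex of the induced subgraph of `G` on `s`). -/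
def indepFacesOn {V : Type} [Fintype V] [DecidableEq V] (G : SimpleGraph V)
    [DecidableRel G.Adj] (s : Finset V) : Finset (Finset V) :=
  s.powerset.filter fun t => ∀ a ∈ t, ∀ b ∈ t, ¬ G.Adj a b

/-- The faces of the independence complex `I(G)`. -/
def indepFaces {V : Type} [Fintype V] [DecidableEq V] (G : SimpleGraph V)
    [DecidableRel G.Adj] : Finset (Finset V) :=
  indepFacesOn G Finset.univ

/-- The independence complex `I(G)` as an abstract simplicial complex. -/
def indepCplx {V : Type} [Fintype V] [DecidableEq V] (G : SimpleGraph V)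
    [DecidableRel G.Adj] : AbsCplx where
  V := V
  faces := indepFaces G
  empty_mem := by simp [indepFaces, indepFacesOn]
  down_closed := by
    intro σ hσ τ hτ
    simp only [indepFaces, indepFacesOn, Finset.mem_filter, Finset.mem_powerset] at hσ ⊢
    exact ⟨hτ.trans hσ.1, fun a ha b hb => hσ.2 a (hτ ha) b (hτ hb)⟩

/-- Reduced Euler characteristic of a finite complex given by its set of faces. -/
def redEuler {V : Type} [DecidableEq V] (K : Finset (Finset V)) : ℤ :=
  ∑ σ ∈ K.filter (fun σ => σ ≠ ∅), (-1 : ℤ) ^ (σ.card - 1)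

/-! ## Grid graphs (0-indexed models of the 1-indexed graphs of the paper) -/

/-- The planar grid graph `P_{m,n}`. -/
def gridP (m n : ℕ) : SimpleGraph (Fin m × Fin n) :=
  SimpleGraph.fromRel fun u v =>
    |(u.1 : ℤ) - (v.1 : ℤ)| + |(u.2 : ℤ) - (v.2 : ℤ)| = 1

instance (m n : ℕ) : DecidableRel (gridP m n).Adj := fun a b =>
  decidable_of_iff _ (SimpleGraph.fromRel_adj _ a b).symm

/-- The cylindrical grid graph `C_{m,n}`: columns indexed cyclically. -/
def gridC (m n : ℕ) : SimpleGraph (Fin m × Fin n) :=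
  SimpleGraph.fromRel fun u v =>
    (u.1 = v.1 ∧ (v.2 : ℕ) = ((u.2 : ℕ) + 1) % n) ∨
    ((u.1 : ℕ) + 1 = (v.1 : ℕ) ∧ u.2 = v.2)

instance (m n : ℕ) : DecidableRel (gridC m n).Adj := fun a b =>
  decidable_of_iff _ (SimpleGraph.fromRel_adj _ a b).symm

/-- The Möbius grid graph `M_{m,n}`. -/
def gridM (m n : ℕ) : SimpleGraph (Fin m × Fin n) :=
  SimpleGraph.fromRel fun u v =>
    ((u.1 : ℕ) + 1 = (v.1 : ℕ) ∧ u.2 = v.2) ∨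
    (u.1 = v.1 ∧ (u.2 : ℕ) + 1 = (v.2 : ℕ)) ∨
    ((u.2 : ℕ) = n - 1 ∧ (v.2 : ℕ) = 0 ∧ (u.1 : ℕ) + (v.1 : ℕ) = m - 1)

instance (m n : ℕ) : DecidableRel (gridM m n).Adj := fun a b =>
  decidable_of_iff _ (SimpleGraph.fromRel_adj _ a b).symm

/-- The cylindrical hexagonal grid graph `C^H_{1,n}`: obtained from `C_{2,2n}`
by deleting the vertical edges in the even columns. -/
def gridCH (n : ℕ) : SimpleGraph (Fin 2 × Fin (2 * n)) :=
  SimpleGraph.fromRel fun u v =>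
    (u.1 = v.1 ∧ (v.2 : ℕ) = ((u.2 : ℕ) + 1) % (2 * n)) ∨
    ((u.1 : ℕ) + 1 = (v.1 : ℕ) ∧ u.2 = v.2 ∧ ¬ Even (u.2 : ℕ))

instance (n : ℕ) : DecidableRel (gridCH n).Adj := fun a b =>
  decidable_of_iff _ (SimpleGraph.fromRel_adj _ a b).symm

/-- `M^H_{1,n}`: obtained from `M_{2,2n}` by deleting the vertical edges in the
odd columns (`1`-indexed), i.e. the even columns in this `0`-indexed model. -/
def gridMH (n : ℕ) : SimpleGraph (Fin 2 × Fin (2 * n)) :=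
  SimpleGraph.fromRel fun u v =>
    ((u.1 : ℕ) + 1 = (v.1 : ℕ) ∧ u.2 = v.2 ∧ ¬ Even (u.2 : ℕ)) ∨
    (u.1 = v.1 ∧ (u.2 : ℕ) + 1 = (v.2 : ℕ)) ∨
    ((u.2 : ℕ) = 2 * n - 1 ∧ (v.2 : ℕ) = 0 ∧ (u.1 : ℕ) + (v.1 : ℕ) = 1)

instance (n : ℕ) : DecidableRel (gridMH n).Adj := fun a b =>
  decidable_of_iff _ (SimpleGraph.fromRel_adj _ a b).symm

/-!
A vertex `u` whose neighbourhood is dominated by a face `t`, i.e. every neighbour of `u` is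
adjacent to a vertex of `t`, is an apex of the link of `t` in the independence complex, so the
open star of `t` collapses away. With `t = {v}` this deletes the vertex `v`, with `t = {a, b}` it
adds the edge `ab`. On `M^H_{1,k+3}` (columns `0, …, 2k+5`) such moves add the edges
`(0,2)(0,2k+5)`, `(1,2)(1,2k+5)`, `(0,0)(1,0)` and remove the row edges between columns `1` and
`2`. Columns `≥ 2` then span a copy of `C^H_{1,k+2}`, and after deleting the two vertices of
column `0` what is left is `C^H_{1,k+2}` disjoint from the rung in column `1`, whose independence
complex is `I(C^H_{1,k+2}) * ∂Δ¹`.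
-/

open Finset SimpleGraph

local infix:50 " ≃ˢ " => SimpleHtpyEq

lemma SimpleHtpyEq.refl (K : AbsCplx) : K ≃ˢ K := Relation.EqvGen.refl K

lemma SimpleHtpyEq.of_eq {K L : AbsCplx} (h : K = L) : K ≃ˢ L := h ▸ .refl K

lemma SimpleHtpyEq.symm {K L : AbsCplx} (h : K ≃ˢ L) : L ≃ˢ K := Relation.EqvGen.symm K L h

lemma SimpleHtpyEq.trans {K L M : AbsCplx} (h₁ : K ≃ˢ L) (h₂ : L ≃ˢ M) : K ≃ˢ M :=
  Relation.EqvGen.trans K L M h₁ h₂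

instance : Trans SimpleHtpyEq SimpleHtpyEq SimpleHtpyEq := ⟨SimpleHtpyEq.trans⟩

lemma AbsCplx.Iso.simpleHtpyEq {K L : AbsCplx} (h : K.Iso L) : K ≃ˢ L :=
  Relation.EqvGen.rel K L (Or.inl h)

namespace AbsCplx

section Collapse

variable {V : Type} [DecidableEq V]

def ofFaces (F : Finset (Finset V)) (h0 : ∅ ∈ F) (hF : ∀ σ ∈ F, ∀ τ ⊆ σ, τ ∈ F) : AbsCplx where
  V := V
  faces := F
  empty_mem := h0
  down_closed := hF

lemma ofFaces_congr {F G : Finset (Finset V)} (h : F = G) {h0 hF h0' hG} :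
    ofFaces F h0 hF = ofFaces G h0' hG := by
  subst h
  rfl

lemma down_closed_sdiff_freePair {F : Finset (Finset V)} (hF : ∀ σ ∈ F, ∀ τ ⊆ σ, τ ∈ F)
    {σ τ : Finset V} (hστ : σ ⊂ τ) (hfree : ∀ ρ ∈ F, σ ⊂ ρ → ρ = τ) :
    ∀ ρ ∈ F \ {σ, τ}, ∀ ρ' ⊆ ρ, ρ' ∈ F \ {σ, τ} := by
  intro ρ hρ ρ' hρ'
  simp only [mem_sdiff, mem_insert, mem_singleton, not_or] at hρ ⊢
  obtain ⟨hρF, hρσ, hρτ⟩ := hρ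
  refine ⟨hF ρ hρF ρ' hρ', ?_, ?_⟩
  · rintro rfl
    exact hρτ (hfree ρ hρF (hρ'.ssubset_of_ne (Ne.symm hρσ)))
  · rintro rfl
    exact hρτ (hfree ρ hρF (hστ.trans_subset hρ'))

lemma simpleHtpyEq_ofFaces_sdiff_freePair {F : Finset (Finset V)} {h0 hF} {σ τ : Finset V}
    (hσ : σ ∈ F) (hτ : τ ∈ F) (hστ : σ ⊂ τ) (hcard : τ.card = σ.card + 1)
    (hfree : ∀ ρ ∈ F, σ ⊂ ρ → ρ = τ) (h0' : ∅ ∈ F \ {σ, τ}) :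
    ofFaces F h0 hF ≃ˢ ofFaces (F \ {σ, τ}) h0' (down_closed_sdiff_freePair hF hστ hfree) :=
  Relation.EqvGen.rel _ _ (Or.inr ⟨rfl, σ, τ, hσ, hτ, hστ, hcard, hfree, rfl⟩)

lemma filter_not_superset_down_closed {F : Finset (Finset V)} (hF : ∀ σ ∈ F, ∀ τ ⊆ σ, τ ∈ F)
    (t : Finset V) : ∀ σ ∈ F.filter (¬ t ⊆ ·), ∀ τ ⊆ σ, τ ∈ F.filter (¬ t ⊆ ·) :=
  fun σ hσ τ hτ => mem_filter.2
    ⟨hF σ (mem_filter.1 hσ).1 τ hτ, fun h => (mem_filter.1 hσ).2 (h.trans hτ)⟩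

lemma eq_insert_of_ssubset_of_maxCard {F : Finset (Finset V)} (hF : ∀ σ ∈ F, ∀ τ ⊆ σ, τ ∈ F)
    {t σ₀ ρ : Finset V} {u : V} (hu : u ∉ t) (htσ₀ : t ⊆ σ₀) (huσ₀ : u ∉ σ₀)
    (hmax : ∀ σ ∈ F, t ⊆ σ → u ∉ σ → σ.card ≤ σ₀.card) (hρ : ρ ∈ F) (hσ₀ρ : σ₀ ⊂ ρ) :
    ρ = insert u σ₀ := by
  have huρ : u ∈ ρ := by
    by_contra huρ
    exact (card_lt_card hσ₀ρ).not_ge (hmax ρ hρ (htσ₀.trans hσ₀ρ.subset) huρ)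
  have hσ₀_eq : σ₀ = ρ.erase u :=
    eq_of_subset_of_card_le (subset_erase.2 ⟨hσ₀ρ.subset, huσ₀⟩) (hmax _
      (hF ρ hρ _ (erase_subset u ρ)) (subset_erase.2 ⟨htσ₀.trans hσ₀ρ.subset, hu⟩)
      (notMem_erase u ρ))
  rw [hσ₀_eq, insert_erase huρ]

/-- The free pairs `(σ, σ ∪ {u})` with `t ⊆ σ` are removed in order of decreasing `|σ|`. -/
theorem simpleHtpyEq_ofFaces_filter_not_superset {F : Finset (Finset V)} {h0 hF} {t : Finset V}
    {u : V} (hu : u ∉ t) (hcone : ∀ σ ∈ F, t ⊆ σ → u ∉ σ → insert u σ ∈ F)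
    (h0' : ∅ ∈ F.filter (¬ t ⊆ ·)) :
    ofFaces F h0 hF ≃ˢ
      ofFaces (F.filter (¬ t ⊆ ·)) h0' (filter_not_superset_down_closed hF t) := by
  by_cases hA : (F.filter fun σ => t ⊆ σ ∧ u ∉ σ).Nonempty
  · obtain ⟨σ₀, hσ₀A, hmax⟩ := exists_max_image _ card hA
    obtain ⟨hσ₀, htσ₀, huσ₀⟩ := mem_filter.1 hσ₀A
    have hfree : ∀ ρ ∈ F, σ₀ ⊂ ρ → ρ = insert u σ₀ := fun ρ =>
      eq_insert_of_ssubset_of_maxCard hF hu htσ₀ huσ₀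
        (fun σ hσ htσ huσ => hmax σ (mem_filter.2 ⟨hσ, htσ, huσ⟩))
    have hmem : ∀ σ, σ ∈ F \ {σ₀, insert u σ₀} ↔ σ ∈ F ∧ σ ≠ σ₀ ∧ σ ≠ insert u σ₀ := by
      simp only [mem_sdiff, mem_insert, mem_singleton, not_or, implies_true]
    have hkept : ∀ σ, ¬ t ⊆ σ → σ ≠ σ₀ ∧ σ ≠ insert u σ₀ := by
      rintro σ htσ
      exact ⟨by rintro rfl; exact htσ htσ₀,
        by rintro rfl; exact htσ (htσ₀.trans (subset_insert _ _))⟩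
    have hcone' : ∀ σ ∈ F \ {σ₀, insert u σ₀}, t ⊆ σ → u ∉ σ →
        insert u σ ∈ F \ {σ₀, insert u σ₀} := by
      intro σ hσ htσ huσ
      rw [hmem] at hσ ⊢
      refine ⟨hcone σ hσ.1 htσ huσ, fun h => huσ₀ (h ▸ mem_insert_self u σ), fun h => ?_⟩
      exact hσ.2.1 (by rw [← erase_insert huσ, h, erase_insert huσ₀])
    have hfilter : (F \ {σ₀, insert u σ₀}).filter (¬ t ⊆ ·) = F.filter (¬ t ⊆ ·) := by
      ext σ
      simp only [mem_filter, hmem]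
      exact ⟨fun h => ⟨h.1.1, h.2⟩, fun h => ⟨⟨h.1, hkept σ h.2⟩, h.2⟩⟩
    have hlt : (F \ {σ₀, insert u σ₀}).card < F.card :=
      card_lt_card (Finset.ssubset_iff_subset_ne.2
        ⟨sdiff_subset, fun h => ((hmem σ₀).1 (by rw [h]; exact hσ₀)).2.1 rfl⟩)
    refine (simpleHtpyEq_ofFaces_sdiff_freePair hσ₀ (hcone σ₀ hσ₀ htσ₀ huσ₀)
      (ssubset_insert huσ₀) (card_insert_of_notMem huσ₀) hfree
      ((hmem ∅).2 ⟨h0, hkept ∅ (mem_filter.1 h0').2⟩)).trans ?_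
    rw [← ofFaces_congr hfilter (h0' := hfilter ▸ h0')]
    exact simpleHtpyEq_ofFaces_filter_not_superset hu hcone' (by rw [hfilter]; exact h0')
  · have hfilter : F.filter (¬ t ⊆ ·) = F := by
      refine filter_true_of_mem fun σ hσ htσ => hA ?_
      by_cases huσ : u ∈ σ
      · exact ⟨σ.erase u, mem_filter.2 ⟨hF σ hσ _ (erase_subset u σ),
          subset_erase.2 ⟨htσ, hu⟩, notMem_erase u σ⟩⟩
      · exact ⟨σ, mem_filter.2 ⟨hσ, htσ, huσ⟩⟩
    rw [ofFaces_congr hfilter (h0' := h0) (hG := hF)]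
    exact SimpleHtpyEq.refl _
termination_by F.card

end Collapse

lemma mem_join_faces (K L : AbsCplx) (ρ : Finset (K.V ⊕ L.V)) :
    ρ ∈ (K.join L).faces ↔ ρ.toLeft ∈ K.faces ∧ ρ.toRight ∈ L.faces := by
  change ρ ∈ (K.faces ×ˢ L.faces).image _ ↔ _
  simp only [mem_image, mem_product, Finset.disjSum_eq_iff]
  constructor
  · rintro ⟨⟨a, b⟩, ⟨h₁, h₂⟩, rfl, rfl⟩
    exact ⟨h₁, h₂⟩
  · exact fun h => ⟨(ρ.toLeft, ρ.toRight), h, rfl, rfl⟩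

lemma iso_of_injective {K L : AbsCplx} (g : L.V → K.V) (hg : Function.Injective g)
    (hrange : ∀ σ ∈ K.faces, ∀ v ∈ σ, v ∈ Set.range g)
    (hfaces : ∀ τ, τ ∈ L.faces ↔ τ.image g ∈ K.faces) : L.Iso K := by
  classical
  refine ⟨g, hg.injOn, Finset.ext fun σ => ⟨fun hσ => ?_, fun hσ => ?_⟩⟩
  · refine mem_image.2 ⟨σ.preimage g hg.injOn, (hfaces _).2 ?_, ?_⟩ <;>
      rw [image_preimage, filter_true_of_mem (hrange σ hσ)]
    exact hσ
  · obtain ⟨τ, hτ, rfl⟩ := mem_image.1 hσ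
    exact (hfaces τ).1 hτ

end AbsCplx

lemma mem_sphere0_faces (τ : Finset Bool) : τ ∈ sphere0.faces ↔ ¬ (false ∈ τ ∧ true ∈ τ) := by
  change τ ∈ ({∅, {false}, {true}} : Finset (Finset Bool)) ↔ _
  revert τ
  decide

section Independence

variable {V : Type} [Fintype V] [DecidableEq V] (G : SimpleGraph V) [DecidableRel G.Adj]

lemma mem_indepFacesOn {s σ : Finset V} :
    σ ∈ indepFacesOn G s ↔ σ ⊆ s ∧ ∀ a ∈ σ, ∀ b ∈ σ, ¬ G.Adj a b := by
  simp [indepFacesOn]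

lemma insert_mem_indepFacesOn {s σ : Finset V} {u : V} (hσ : σ ∈ indepFacesOn G s) (hu : u ∈ s)
    (huσ : ∀ y ∈ σ, ¬ G.Adj u y) : insert u σ ∈ indepFacesOn G s := by
  rw [mem_indepFacesOn] at hσ ⊢
  refine ⟨insert_subset hu hσ.1, ?_⟩
  simp only [mem_insert, forall_eq_or_imp, G.irrefl, not_false_eq_true, true_and]
  exact ⟨huσ, fun a ha => ⟨fun h => huσ a ha h.symm, hσ.2 a ha⟩⟩

def indepCplxOn (s : Finset V) : AbsCplx :=
  AbsCplx.ofFaces (indepFacesOn G s) (by simp [mem_indepFacesOn])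
    (fun σ hσ τ hτ => by
      rw [mem_indepFacesOn] at hσ ⊢
      exact ⟨hτ.trans hσ.1, fun a ha b hb => hσ.2 a (hτ ha) b (hτ hb)⟩)

theorem simpleHtpyEq_indepCplxOn_filter_not_superset {s t : Finset V} {u : V} (hus : u ∈ s)
    (hut : u ∉ t) (hN : ∀ y ∈ s, G.Adj u y → ∃ x ∈ t, G.Adj x y) (h0) :
    indepCplxOn G s ≃ˢ AbsCplx.ofFaces ((indepFacesOn G s).filter (¬ t ⊆ ·)) h0
      (AbsCplx.filter_not_superset_down_closed (indepCplxOn G s).down_closed t) := by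
  refine AbsCplx.simpleHtpyEq_ofFaces_filter_not_superset hut (fun σ hσ htσ _ => ?_) h0
  refine insert_mem_indepFacesOn G hσ hus fun y hy hadj => ?_
  have hσ' := (mem_indepFacesOn G).1 hσ
  obtain ⟨x, hx, hxy⟩ := hN y (hσ'.1 hy) hadj
  exact hσ'.2 x (htσ hx) y hy hxy

theorem simpleHtpyEq_indepCplxOn_erase {s : Finset V} {u v : V} (hus : u ∈ s) (huv : u ≠ v)
    (hN : ∀ y ∈ s, G.Adj u y → G.Adj v y) : indepCplxOn G s ≃ˢ indepCplxOn G (s.erase v) := by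
  have hfaces : indepFacesOn G (s.erase v) = (indepFacesOn G s).filter (¬ {v} ⊆ ·) := by
    ext σ
    simp only [mem_filter, mem_indepFacesOn, singleton_subset_iff, subset_erase]
    tauto
  exact (simpleHtpyEq_indepCplxOn_filter_not_superset G hus (by simpa using huv)
    (fun y hy hadj => ⟨v, mem_singleton_self v, hN y hy hadj⟩)
    (hfaces ▸ (indepCplxOn G _).empty_mem)).trans (.of_eq (AbsCplx.ofFaces_congr hfaces.symm))

lemma indepFaces_sup_edge {a b : V} (hab : a ≠ b) :
    indepFaces (G ⊔ edge a b) = (indepFaces G).filter (¬ {a, b} ⊆ ·) := by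
  ext σ
  simp only [indepFaces, mem_filter, mem_indepFacesOn, sup_adj, edge_adj, insert_subset_iff,
    singleton_subset_iff, subset_univ, true_and]
  constructor
  · exact fun h => ⟨fun x hx y hy hxy => h x hx y hy (Or.inl hxy),
      fun hsub => h a hsub.1 b hsub.2 (Or.inr ⟨Or.inl ⟨rfl, rfl⟩, hab⟩)⟩
  · rintro ⟨h, hab'⟩ x hx y hy (hxy | ⟨⟨rfl, rfl⟩ | ⟨rfl, rfl⟩, -⟩)
    exacts [h x hx y hy hxy, hab' ⟨hx, hy⟩, hab' ⟨hy, hx⟩]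

theorem simpleHtpyEq_indepCplx_sup_edge {a b u : V} (hua : u ≠ a) (hub : u ≠ b)
    (hN : ∀ y, G.Adj u y → G.Adj a y ∨ G.Adj b y) : indepCplx G ≃ˢ indepCplx (G ⊔ edge a b) := by
  rcases eq_or_ne a b with rfl | hab
  · convert SimpleHtpyEq.refl (indepCplx G)
    simp
  exact (simpleHtpyEq_indepCplxOn_filter_not_superset G (t := {a, b}) (mem_univ u)
    (by simp [hua, hub]) (fun y _ hadj => by simpa using hN y hadj)
    (indepFaces_sup_edge G hab ▸ (indepCplx (G ⊔ edge a b)).empty_mem)).trans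
    (.of_eq (AbsCplx.ofFaces_congr (indepFaces_sup_edge G hab).symm))

/-- First the faces containing `{a, b, c}` are collapsed away with apex `u`; after that `c` is no
longer a neighbour of `w` in any face containing `{a, b}`, so `w` is an apex for `{a, b}`. -/
theorem simpleHtpyEq_indepCplx_sup_edge_of_apices {a b c u w : V} (hua : u ≠ a) (hub : u ≠ b)
    (huc : u ≠ c) (hwa : w ≠ a) (hwb : w ≠ b) (hwc : w ≠ c)
    (hNu : ∀ y, G.Adj u y → G.Adj a y ∨ G.Adj b y ∨ G.Adj c y)
    (hNw : ∀ y, G.Adj w y → G.Adj a y ∨ G.Adj b y ∨ y = c) :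
    indepCplx G ≃ˢ indepCplx (G ⊔ edge a b) := by
  rcases eq_or_ne a b with rfl | hab
  · convert SimpleHtpyEq.refl (indepCplx G)
    simp
  set F := (indepFaces G).filter (¬ {a, b, c} ⊆ ·)
  have hfaces : indepFaces (G ⊔ edge a b) = F.filter (¬ {a, b} ⊆ ·) := by
    rw [indepFaces_sup_edge G hab, filter_filter]
    refine filter_congr fun σ _ => ?_
    simp only [insert_subset_iff, singleton_subset_iff]
    tauto
  have h0 : ∅ ∈ F.filter (¬ {a, b} ⊆ ·) := hfaces ▸ (indepCplx (G ⊔ edge a b)).empty_mem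
  have hcone : ∀ σ ∈ F, {a, b} ⊆ σ → w ∉ σ → insert w σ ∈ F := by
    intro σ hσ habσ _
    obtain ⟨hσI, hcσ⟩ := mem_filter.1 hσ
    have habσ' : a ∈ σ ∧ b ∈ σ := by simpa [insert_subset_iff] using habσ
    have hc : c ∉ σ := fun hc => hcσ (by simp [insert_subset_iff, habσ', hc])
    refine mem_filter.2 ⟨insert_mem_indepFacesOn G hσI (mem_univ w) fun y hy hwy => ?_, ?_⟩
    · have hσI' := ((mem_indepFacesOn G).1 hσI).2
      rcases hNw y hwy with hay | hby | rfl
      exacts [hσI' a habσ'.1 y hy hay, hσI' b habσ'.2 y hy hby, hc hy]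
    · simp only [insert_subset_iff, singleton_subset_iff, mem_insert, hwc.symm, false_or, hc,
        and_false, not_false_eq_true]
  have h₁ := simpleHtpyEq_indepCplxOn_filter_not_superset G (t := {a, b, c}) (mem_univ u)
    (by simp [hua, hub, huc]) (fun y _ hadj => by simpa using hNu y hadj) (mem_filter.1 h0).1
  have h₂ := AbsCplx.simpleHtpyEq_ofFaces_filter_not_superset (h0 := (mem_filter.1 h0).1)
    (hF := AbsCplx.filter_not_superset_down_closed (indepCplx G).down_closed _)
    (by simp [hwa, hwb]) hcone h0
  exact h₁.trans (h₂.trans (.of_eq (AbsCplx.ofFaces_congr hfaces.symm)))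

/-- The instances are implicit so that they are found by unification: synthesizing one for a
graph with three `⊔ edge` summands exceeds the default instance size. -/
lemma indepCplx_congr {G H : SimpleGraph V} {_ : DecidableRel G.Adj} {_ : DecidableRel H.Adj}
    (h : G = H) : indepCplx G = indepCplx H := by
  subst h
  congr

end Independence

lemma Nat.eq_add_one_mod_iff {a b m : ℕ} (ha : a < m) (hb : b < m) :
    b = (a + 1) % m ↔ a + 1 = b ∨ a + 1 = m ∧ b = 0 := by
  rcases Nat.lt_or_ge (a + 1) m with h | h
  · rw [Nat.mod_eq_of_lt h]
    omega
  · rw [show a + 1 = m by omega, Nat.mod_self]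
    omega

section MoebiusHex

variable (k : ℕ)

/-- The vertex in row `r` and column `c`, for `r ≤ 1` and `c ≤ 2k+5`; out-of-range coordinates
are clamped. -/
def cell (r c : ℕ) : Fin 2 × Fin (2 * (k + 2 + 1)) :=
  (⟨min r 1, by omega⟩, ⟨min c (2 * k + 5), by omega⟩)

/-- `M^H_{1,k+3}` with a rung added in column `0` and the row edges between columns `1, 2`
replaced by edges between columns `2, 2k+5`: columns `≥ 2` span a copy of `C^H_{1,k+2}`, columns
`0, 1` a square, joined by the two twisted edges. -/
def gridMHSplit : SimpleGraph (Fin 2 × Fin (2 * (k + 2 + 1))) :=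
  SimpleGraph.fromRel fun u v =>
    ((u.1 : ℕ) + 1 = v.1 ∧ u.2 = v.2 ∧ ((u.2 : ℕ) % 2 = 1 ∨ (u.2 : ℕ) = 0)) ∨
    (u.1 = v.1 ∧ (u.2 : ℕ) + 1 = v.2 ∧ (u.2 : ℕ) ≠ 1) ∨
    ((u.2 : ℕ) = 2 * k + 5 ∧ (v.2 : ℕ) = 0 ∧ (u.1 : ℕ) + v.1 = 1) ∨
    (u.1 = v.1 ∧ (u.2 : ℕ) = 2 ∧ (v.2 : ℕ) = 2 * k + 5)

instance : DecidableRel (gridMHSplit k).Adj := fun a b =>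
  decidable_of_iff _ (SimpleGraph.fromRel_adj _ a b).symm

lemma gridMH_sup_edges_eq :
    gridMH (k + 2 + 1) ⊔ edge (cell k 0 2) (cell k 0 (2 * k + 5))
        ⊔ edge (cell k 1 2) (cell k 1 (2 * k + 5)) ⊔ edge (cell k 0 0) (cell k 1 0) =
      gridMHSplit k ⊔ edge (cell k 1 1) (cell k 1 2) ⊔ edge (cell k 0 1) (cell k 0 2) := by
  ext ⟨⟨r, hr⟩, ⟨c, hc⟩⟩ ⟨⟨r', hr'⟩, ⟨c', hc'⟩⟩
  simp only [gridMH, gridMHSplit, cell, fromRel_adj, sup_adj, edge_adj, ne_eq, Prod.mk.injEq,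
    Fin.mk.injEq, Nat.even_iff]
  interval_cases r <;> interval_cases r' <;> simp <;> omega

theorem indepCplx_gridMH_simpleHtpyEq_gridMHSplit :
    indepCplx (gridMH (k + 2 + 1)) ≃ˢ indepCplx (gridMHSplit k) :=
  calc indepCplx (gridMH (k + 2 + 1))
    _ ≃ˢ indepCplx (gridMH (k + 2 + 1) ⊔ edge (cell k 0 2) (cell k 0 (2 * k + 5))) := by
      refine simpleHtpyEq_indepCplx_sup_edge _ (u := cell k 0 0) (by simp [cell])
        (by simp [cell]) ?_
      rintro ⟨⟨r, hr⟩, ⟨c, hc⟩⟩ h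
      simp only [gridMH, cell, fromRel_adj, ne_eq, Prod.mk.injEq, Fin.mk.injEq,
        Nat.even_iff] at h ⊢
      interval_cases r <;> simp at h ⊢ <;> omega
    _ ≃ˢ indepCplx (gridMH (k + 2 + 1) ⊔ edge (cell k 0 2) (cell k 0 (2 * k + 5))
          ⊔ edge (cell k 1 2) (cell k 1 (2 * k + 5))) := by
      refine simpleHtpyEq_indepCplx_sup_edge _ (u := cell k 1 0) (by simp [cell])
        (by simp [cell]) ?_
      rintro ⟨⟨r, hr⟩, ⟨c, hc⟩⟩ h
      simp only [gridMH, cell, fromRel_adj, sup_adj, edge_adj, ne_eq, Prod.mk.injEq,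
        Fin.mk.injEq, Nat.even_iff] at h ⊢
      interval_cases r <;> simp at h ⊢ <;> omega
    _ ≃ˢ indepCplx (gridMHSplit k ⊔ edge (cell k 1 1) (cell k 1 2)
          ⊔ edge (cell k 0 1) (cell k 0 2)) := by
      refine (simpleHtpyEq_indepCplx_sup_edge_of_apices _ (c := cell k 1 3) (u := cell k 0 2)
        (w := cell k 1 2) (by simp [cell]) (by simp [cell]) (by simp [cell]) (by simp [cell])
        (by simp [cell]) (by simp [cell]) ?_ ?_).trans
        (.of_eq (indepCplx_congr (gridMH_sup_edges_eq k))) <;>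
      · rintro ⟨⟨r, hr⟩, ⟨c, hc⟩⟩ h
        simp only [gridMH, cell, fromRel_adj, sup_adj, edge_adj, ne_eq, Prod.mk.injEq,
          Fin.mk.injEq, Nat.even_iff] at h ⊢
        interval_cases r <;> simp at h ⊢ <;> omega
    _ ≃ˢ indepCplx (gridMHSplit k ⊔ edge (cell k 1 1) (cell k 1 2)) := by
      refine (simpleHtpyEq_indepCplx_sup_edge _ (u := cell k 1 0) (by simp [cell])
        (by simp [cell]) ?_).symm
      rintro ⟨⟨r, hr⟩, ⟨c, hc⟩⟩ h
      simp only [gridMHSplit, cell, fromRel_adj, sup_adj, edge_adj, ne_eq, Prod.mk.injEq,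
        Fin.mk.injEq] at h ⊢
      interval_cases r <;> simp at h ⊢ <;> omega
    _ ≃ˢ indepCplx (gridMHSplit k) := by
      refine (simpleHtpyEq_indepCplx_sup_edge _ (u := cell k 0 0) (by simp [cell])
        (by simp [cell]) ?_).symm
      rintro ⟨⟨r, hr⟩, ⟨c, hc⟩⟩ h
      simp only [gridMHSplit, cell, fromRel_adj, ne_eq, Prod.mk.injEq, Fin.mk.injEq] at h ⊢
      interval_cases r <;> simp at h ⊢ <;> omega

def nonzeroCols : Finset (Fin 2 × Fin (2 * (k + 2 + 1))) :=
  (univ.erase (cell k 0 0)).erase (cell k 1 0)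

lemma mem_nonzeroCols {v : Fin 2 × Fin (2 * (k + 2 + 1))} : v ∈ nonzeroCols k ↔ (v.2 : ℕ) ≠ 0 := by
  obtain ⟨⟨r, hr⟩, ⟨c, hc⟩⟩ := v
  simp only [nonzeroCols, cell, mem_erase, mem_univ, ne_eq, Prod.mk.injEq, Fin.mk.injEq,
    and_true]
  omega

theorem indepCplx_gridMHSplit_simpleHtpyEq_nonzeroCols :
    indepCplx (gridMHSplit k) ≃ˢ indepCplxOn (gridMHSplit k) (nonzeroCols k) :=
  calc indepCplx (gridMHSplit k)
    _ ≃ˢ indepCplxOn (gridMHSplit k) (univ.erase (cell k 0 0)) := by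
      refine simpleHtpyEq_indepCplxOn_erase _ (u := cell k 1 1) (mem_univ _) (by simp [cell]) ?_
      rintro ⟨⟨r, hr⟩, ⟨c, hc⟩⟩ - h
      simp only [gridMHSplit, cell, fromRel_adj, ne_eq, Prod.mk.injEq, Fin.mk.injEq] at h ⊢
      interval_cases r <;> simp at h ⊢ <;> omega
    _ ≃ˢ indepCplxOn (gridMHSplit k) (nonzeroCols k) := by
      refine simpleHtpyEq_indepCplxOn_erase _ (u := cell k 0 1) (by simp [cell]) (by simp [cell]) ?_
      rintro ⟨⟨r, hr⟩, ⟨c, hc⟩⟩ hy h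
      simp only [gridMHSplit, cell, mem_erase, mem_univ, fromRel_adj, ne_eq, Prod.mk.injEq,
        Fin.mk.injEq] at hy h ⊢
      interval_cases r <;> simp at hy h ⊢ <;> omega

def shiftCol (w : Fin 2 × Fin (2 * (k + 2))) : Fin 2 × Fin (2 * (k + 2 + 1)) :=
  (w.1, ⟨w.2 + 2, by omega⟩)

def col1 (b : Bool) : Fin 2 × Fin (2 * (k + 2 + 1)) := cell k (cond b 1 0) 1

lemma gridMHSplit_adj_shiftCol (w w' : Fin 2 × Fin (2 * (k + 2))) :
    (gridMHSplit k).Adj (shiftCol k w) (shiftCol k w') ↔ (gridCH (k + 2)).Adj w w' := by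
  obtain ⟨⟨r, hr⟩, ⟨c, hc⟩⟩ := w
  obtain ⟨⟨r', hr'⟩, ⟨c', hc'⟩⟩ := w'
  simp only [gridMHSplit, gridCH, shiftCol, fromRel_adj, ne_eq, Prod.mk.injEq, Fin.mk.injEq,
    Nat.even_iff, Nat.eq_add_one_mod_iff hc hc', Nat.eq_add_one_mod_iff hc' hc]
  interval_cases r <;> interval_cases r' <;> simp <;> omega

lemma not_gridMHSplit_adj_shiftCol_col1 (w : Fin 2 × Fin (2 * (k + 2))) (b : Bool) :
    ¬ (gridMHSplit k).Adj (shiftCol k w) (col1 k b) := by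
  obtain ⟨⟨r, hr⟩, ⟨c, hc⟩⟩ := w
  cases b <;>
  · simp only [gridMHSplit, shiftCol, col1, cell, fromRel_adj, ne_eq, Prod.mk.injEq, Fin.mk.injEq]
    interval_cases r <;> simp

lemma gridMHSplit_adj_col1 (b b' : Bool) :
    (gridMHSplit k).Adj (col1 k b) (col1 k b') ↔ b ≠ b' := by
  cases b <;> cases b' <;> simp [gridMHSplit, col1, cell]

lemma gridMHSplit_adj_elim (a b : (Fin 2 × Fin (2 * (k + 2))) ⊕ Bool) :
    (gridMHSplit k).Adj (Sum.elim (shiftCol k) (col1 k) a) (Sum.elim (shiftCol k) (col1 k) b) ↔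
      Sum.LiftRel (gridCH (k + 2)).Adj (· ≠ ·) a b := by
  rcases a with w | b₁ <;> rcases b with w' | b₂
  · simpa using gridMHSplit_adj_shiftCol k w w'
  · simpa using not_gridMHSplit_adj_shiftCol_col1 k w b₂
  · simpa [adj_comm] using not_gridMHSplit_adj_shiftCol_col1 k w' b₁
  · simpa using gridMHSplit_adj_col1 k b₁ b₂

lemma injective_elim_shiftCol_col1 : Function.Injective (Sum.elim (shiftCol k) (col1 k)) := by
  rintro (⟨⟨r, hr⟩, ⟨c, hc⟩⟩ | _ | _) (⟨⟨r', hr'⟩, ⟨c', hc'⟩⟩ | _ | _) h <;>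
    simp only [Sum.elim_inl, Sum.elim_inr, shiftCol, col1, cell, cond_true, cond_false,
      Prod.mk.injEq, Fin.mk.injEq, Sum.inl.injEq, Sum.inr.injEq, reduceCtorEq,
      Bool.false_eq_true, Bool.true_eq_false] at h ⊢ <;>
    omega

lemma mem_range_elim_shiftCol_col1 {v : Fin 2 × Fin (2 * (k + 2 + 1))} (hv : (v.2 : ℕ) ≠ 0) :
    v ∈ Set.range (Sum.elim (shiftCol k) (col1 k)) := by
  obtain ⟨⟨r, hr⟩, ⟨c, hc⟩⟩ := v
  dsimp only at hv
  rcases eq_or_ne c 1 with rfl | hc1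
  · refine ⟨.inr (r = 1), ?_⟩
    interval_cases r <;> rfl
  · refine ⟨.inl (⟨r, hr⟩, ⟨c - 2, by omega⟩), ?_⟩
    simp only [Sum.elim_inl, shiftCol, Prod.mk.injEq, Fin.mk.injEq, true_and]
    omega

lemma image_elim_mem_indepFacesOn_iff (τ : Finset ((Fin 2 × Fin (2 * (k + 2))) ⊕ Bool)) :
    τ.toLeft ∈ indepFaces (gridCH (k + 2)) ∧ ¬ (false ∈ τ.toRight ∧ true ∈ τ.toRight) ↔
      τ.image (Sum.elim (shiftCol k) (col1 k)) ∈ indepFacesOn (gridMHSplit k) (nonzeroCols k) := by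
  have hsub : τ.image (Sum.elim (shiftCol k) (col1 k)) ⊆ nonzeroCols k := by
    refine image_subset_iff.2 fun x _ => (mem_nonzeroCols k).2 ?_
    rcases x with w | (_ | _) <;> simp [shiftCol, col1, cell]
  simp only [indepFaces, mem_indepFacesOn, subset_univ, true_and, hsub, forall_mem_image,
    gridMHSplit_adj_elim]
  constructor
  · rintro ⟨hL, hR⟩ (a | b) ha (a' | b') ha' h
    · exact hL a (mem_toLeft.2 ha) a' (mem_toLeft.2 ha') (Sum.liftRel_inl_inl.1 h)
    · exact Sum.not_liftRel_inl_inr h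
    · exact Sum.not_liftRel_inr_inl h
    · have hbb' := Sum.liftRel_inr_inr.1 h
      cases b <;> cases b' <;> simp_all
  · intro h
    exact ⟨fun a ha b hb hab => h (mem_toLeft.1 ha) (mem_toLeft.1 hb) (.inl hab),
      fun hft => h (mem_toRight.1 hft.1) (mem_toRight.1 hft.2) (.inr Bool.false_ne_true)⟩

theorem susp_indepCplx_gridCH_iso :
    (indepCplx (gridCH (k + 2))).susp.Iso (indepCplxOn (gridMHSplit k) (nonzeroCols k)) :=
  AbsCplx.iso_of_injective _ (injective_elim_shiftCol_col1 k)
    (fun _ hσ _ hv => mem_range_elim_shiftCol_col1 k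
      ((mem_nonzeroCols k).1 (((mem_indepFacesOn _).1 hσ).1 hv)))
    fun τ => (AbsCplx.mem_join_faces _ sphere0 τ).trans
      ((Iff.rfl.and (mem_sphere0_faces _)).trans (image_elim_mem_indepFacesOn_iff k τ))

end MoebiusHex

/-- `I(M^H_{1,n+1}) ≃ˢ Σ I(C^H_{1,n})` for all `n ≥ 2`. -/
theorem indepCplx_gridMH_succ (n : ℕ) (hn : 2 ≤ n) :
    SimpleHtpyEq (indepCplx (gridMH (n + 1))) ((indepCplx (gridCH n)).susp) := by
  obtain ⟨k, rfl⟩ : ∃ k, n = k + 2 := ⟨n - 2, by omega⟩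
  calc indepCplx (gridMH (k + 2 + 1))
    _ ≃ˢ indepCplx (gridMHSplit k) := indepCplx_gridMH_simpleHtpyEq_gridMHSplit k
    _ ≃ˢ indepCplxOn (gridMHSplit k) (nonzeroCols k) :=
      indepCplx_gridMHSplit_simpleHtpyEq_nonzeroCols k
    _ ≃ˢ (indepCplx (gridCH (k + 2))).susp := (susp_indepCplx_gridCH_iso k).simpleHtpyEq.symm
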